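/- arXiv:2207.05527 — 4 statements merged into one kernel-verified Lean document; each statement's English description precedes it below -/
import Mathlib

section
/- Let p > 3 be prime and let ζ = exp(2πi/p). Then for all distinct j, k ∈ {0, 1, ..., (p−1)/2}, the ratio cos(2πj/p)/cos(2πk/p) is irrational. Equivalently, there do not exist nonzero integers a, b with a(ζ^j + ζ^{−j}) = b(ζ^k + ζ^{−k}). -/
open Real

open Polynomial in
lemma key_lemma (p : ℕ) (hp : p.Prime) (ζ : ℂ) (hζ : IsPrimitiveRoot ζ p)
    (c : ℕ → ℚ) (h : ∑ i ∈ Finset.range p, (c i : ℂ) * ζ ^ i = 0) :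
    ∀ i < p, ∀ j < p, c i = c j := by
  haveI : Fact p.Prime := ⟨hp⟩
  set P : ℚ[X] := ∑ i ∈ Finset.range p, C (c i) * X ^ i with hP
  have hcoeff : ∀ m < p, P.coeff m = c m := by
    intro m hm
    rw [hP, finset_sum_coeff]
    simp only [coeff_C_mul, coeff_X_pow]
    rw [Finset.sum_eq_single m]
    · simp
    · intro b hb hbm; simp [Ne.symm hbm]
    · intro hm'; exact absurd (Finset.mem_range.mpr hm) hm'
  have haev : aeval ζ P = 0 := by
    rw [hP]
    simp only [map_sum, map_mul, aeval_C, map_pow, aeval_X]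
    simpa using h
  have hdvd : cyclotomic p ℚ ∣ P := by
    rw [cyclotomic_eq_minpoly_rat hζ hp.pos]
    exact minpoly.dvd ℚ ζ haev
  obtain ⟨q, hq⟩ := hdvd
  have hdegP : P.natDegree ≤ p - 1 := by
    apply natDegree_sum_le_of_forall_le
    intro i hi
    refine (natDegree_C_mul_le _ _).trans ?_
    rw [natDegree_X_pow]
    have := Finset.mem_range.mp hi
    omega
  have hdegPhi : (cyclotomic p ℚ).natDegree = p - 1 := by
    rw [natDegree_cyclotomic, Nat.totient_prime hp]
  have hPhicoeff : ∀ m < p, (cyclotomic p ℚ).coeff m = 1 := by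
    intro m hm
    rw [cyclotomic_prime, finset_sum_coeff]
    simp only [coeff_X_pow]
    rw [Finset.sum_eq_single m]
    · simp
    · intro b hb hbm; simp [Ne.symm hbm]
    · intro hm'; exact absurd (Finset.mem_range.mpr hm) hm'
  by_cases hq0 : q = 0
  · have hP0 : P = 0 := by rw [hq, hq0, mul_zero]
    intro i hi j hj
    have h1 := hcoeff i hi
    have h2 := hcoeff j hj
    rw [hP0, coeff_zero] at h1 h2
    rw [← h1, ← h2]
  · have hPhine : cyclotomic p ℚ ≠ 0 := cyclotomic_ne_zero p ℚ
    have hdeg : P.natDegree = (cyclotomic p ℚ).natDegree + q.natDegree := by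
      rw [hq, natDegree_mul hPhine hq0]
    have h2 := hp.two_le
    have hqdeg : q.natDegree = 0 := by omega
    obtain ⟨r, hr⟩ := natDegree_eq_zero.mp hqdeg
    have hcm : ∀ m < p, c m = r := by
      intro m hm
      rw [← hcoeff m hm, hq, ← hr, coeff_mul_C, hPhicoeff m hm, one_mul]
    intro i hi j hj
    rw [hcm i hi, hcm j hj]

lemma no_rel (p : ℕ) (hp : p.Prime) (hp3 : 3 < p) (j k : ℕ)
    (hj : j ≤ (p - 1) / 2) (hk : k ≤ (p - 1) / 2) (hjk : j ≠ k)
    (ζ : ℂ) (hζ : IsPrimitiveRoot ζ p) (a b : ℚ)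
    (hrel : (a : ℂ) * (ζ ^ (j : ℤ) + ζ ^ (-(j : ℤ))) =
      (b : ℂ) * (ζ ^ (k : ℤ) + ζ ^ (-(k : ℤ)))) :
    a = 0 ∧ b = 0 := by
  have hodd : p % 2 = 1 := Nat.odd_iff.mp (hp.odd_of_ne_two (by omega))
  have hjp : j < p := by omega
  have hkp : k < p := by omega
  have hζp : ζ ^ p = 1 := hζ.pow_eq_one
  have hpow : ∀ m : ℕ, m < p → ζ ^ ((p - m) % p) = ζ ^ (-(m : ℤ)) := by
    intro m hm
    have h1 : ζ ^ ((p - m) % p) * ζ ^ m = 1 := by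
      rw [← pow_eq_pow_mod _ hζp, ← pow_add, show p - m + m = p by omega, hζp]
    rw [eq_inv_of_mul_eq_one_left h1, ← zpow_natCast ζ m, ← zpow_neg]
  set c : ℕ → ℚ := fun i => (if i = j then a else 0) + (if i = (p - j) % p then a else 0)
      - (if i = k then b else 0) - (if i = (p - k) % p then b else 0) with hc
  have hmemj : j ∈ Finset.range p := Finset.mem_range.mpr hjp
  have hmemk : k ∈ Finset.range p := Finset.mem_range.mpr hkp
  have hmempj : (p - j) % p ∈ Finset.range p := Finset.mem_range.mpr (Nat.mod_lt _ hp.pos)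
  have hmempk : (p - k) % p ∈ Finset.range p := Finset.mem_range.mpr (Nat.mod_lt _ hp.pos)
  have hsplit : ∑ i ∈ Finset.range p, (c i : ℂ) * ζ ^ i
      = (a : ℂ) * ζ ^ j + (a : ℂ) * ζ ^ ((p - j) % p)
        - (b : ℂ) * ζ ^ k - (b : ℂ) * ζ ^ ((p - k) % p) := by
    simp only [hc, Rat.cast_add, Rat.cast_sub, apply_ite (fun q : ℚ => (q : ℂ)), Rat.cast_zero]
    simp only [add_mul, sub_mul, ite_mul, zero_mul, Finset.sum_add_distrib,
      Finset.sum_sub_distrib, Finset.sum_ite_eq', if_pos hmemj, if_pos hmemk,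
      if_pos hmempj, if_pos hmempk]
  have hzsum : ∑ i ∈ Finset.range p, (c i : ℂ) * ζ ^ i = 0 := by
    rw [hsplit, hpow j hjp, hpow k hkp, ← zpow_natCast ζ j, ← zpow_natCast ζ k]
    linear_combination hrel
  have heq := key_lemma p hp ζ hζ c hzsum
  have hsumQ : ∑ i ∈ Finset.range p, c i = 2 * a - 2 * b := by
    simp only [hc, Finset.sum_add_distrib, Finset.sum_sub_distrib, Finset.sum_ite_eq',
      if_pos hmemj, if_pos hmemk, if_pos hmempj, if_pos hmempk]
    ring
  have hsumP : ∑ i ∈ Finset.range p, c i = (p : ℚ) * c j := by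
    rw [Finset.sum_congr rfl fun i hi => heq i (Finset.mem_range.mp hi) j hjp,
      Finset.sum_const, Finset.card_range, nsmul_eq_mul]
  have E2 : (p : ℚ) * c j = 2 * a - 2 * b := by rw [← hsumP, hsumQ]
  have E1 : c j = c k := heq j hjp k hkp
  have hp5 : (5 : ℚ) ≤ (p : ℚ) := by exact_mod_cast (by omega : 5 ≤ p)
  rcases Nat.eq_zero_or_pos j with hj0 | hj1
  · -- j = 0
    subst hj0
    have hk1 : 1 ≤ k := by omega
    have ek : (p - k) % p = p - k := Nat.mod_eq_of_lt (by omega)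
    have ej : (p - 0) % p = 0 := by simp
    have h1 : ¬(0 = k) := by omega
    have h2 : ¬((0:ℕ) = p - k) := by omega
    have h3 : ¬(k = 0) := by omega
    have h4 : ¬(k = p - k) := by omega
    have cj : c 0 = 2 * a := by
      rw [show c 0 = ((if 0 = 0 then a else 0) + (if 0 = (p - 0) % p then a else 0))
          - (if 0 = k then b else 0) - (if (0:ℕ) = (p - k) % p then b else 0) from rfl,
        ej, ek, if_pos rfl, if_neg h1, if_neg h2]
      ring
    have ck : c k = -b := by
      rw [show c k = ((if k = 0 then a else 0) + (if k = (p - 0) % p then a else 0))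
          - (if k = k then b else 0) - (if k = (p - k) % p then b else 0) from rfl,
        ej, ek, if_neg h3, if_pos rfl, if_neg h4]
      ring
    rw [cj] at E2 E1
    rw [ck] at E1
    have hb : b = -(2 * a) := by linarith
    have h0 : ((p : ℚ) * 2 - 6) * a = 0 := by rw [hb] at E2; linarith [E2]
    have ha : a = 0 := by
      rcases mul_eq_zero.mp h0 with h | h
      · linarith
      · exact h
    exact ⟨ha, by rw [hb, ha]; ring⟩
  · rcases Nat.eq_zero_or_pos k with hk0 | hk1
    · -- k = 0
      subst hk0
      have ej : (p - j) % p = p - j := Nat.mod_eq_of_lt (by omega)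
      have ek : (p - 0) % p = 0 := by simp
      have h1 : ¬(j = p - j) := by omega
      have h2 : ¬(j = 0) := by omega
      have h3 : ¬((0:ℕ) = j) := by omega
      have h4 : ¬((0:ℕ) = p - j) := by omega
      have cj : c j = a := by
        rw [show c j = ((if j = j then a else 0) + (if j = (p - j) % p then a else 0))
            - (if j = 0 then b else 0) - (if j = (p - 0) % p then b else 0) from rfl,
          ej, ek, if_pos rfl, if_neg h1, if_neg h2]
        ring
      have ck : c 0 = -(2 * b) := by
        rw [show c 0 = ((if (0:ℕ) = j then a else 0) + (if (0:ℕ) = (p - j) % p then a else 0))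
            - (if 0 = 0 then b else 0) - (if (0:ℕ) = (p - 0) % p then b else 0) from rfl,
          ej, ek, if_neg h3, if_neg h4, if_pos rfl]
        ring
      rw [cj] at E2 E1
      rw [ck] at E1
      have ha : a = -(2 * b) := by linarith
      have h0 : ((p : ℚ) * 2 - 6) * b = 0 := by rw [ha] at E2; linarith [E2]
      have hb : b = 0 := by
        rcases mul_eq_zero.mp h0 with h | h
        · linarith
        · exact h
      exact ⟨by rw [ha, hb]; ring, hb⟩
    · -- j, k ≥ 1
      have ej : (p - j) % p = p - j := Nat.mod_eq_of_lt (by omega)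
      have ek : (p - k) % p = p - k := Nat.mod_eq_of_lt (by omega)
      have h1 : ¬(j = p - j) := by omega
      have h2 : ¬(j = k) := hjk
      have h3 : ¬(j = p - k) := by omega
      have h4 : ¬(k = j) := by omega
      have h5 : ¬(k = p - j) := by omega
      have h6 : ¬(k = p - k) := by omega
      have cj : c j = a := by
        rw [show c j = ((if j = j then a else 0) + (if j = (p - j) % p then a else 0))
            - (if j = k then b else 0) - (if j = (p - k) % p then b else 0) from rfl,
          ej, ek, if_pos rfl, if_neg h1, if_neg h2, if_neg h3]
        ring
      have ck : c k = -b := by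
        rw [show c k = ((if k = j then a else 0) + (if k = (p - j) % p then a else 0))
            - (if k = k then b else 0) - (if k = (p - k) % p then b else 0) from rfl,
          ej, ek, if_neg h4, if_neg h5, if_pos rfl, if_neg h6]
        ring
      rw [cj] at E2 E1
      rw [ck] at E1
      have hb : b = -a := by linarith
      have h0 : ((p : ℚ) - 4) * a = 0 := by rw [hb] at E2; linarith [E2]
      have ha : a = 0 := by
        rcases mul_eq_zero.mp h0 with h | h
        · linarith
        · exact h
      exact ⟨ha, by rw [hb, ha]; ring⟩

/-- If `p > 3` is prime, then for all distinct `j, k ∈ {0, 1, ..., (p−1)/2}` the ratio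
`cos(2πj/p)/cos(2πk/p)` is irrational; equivalently, there are no nonzero integers `a, b` with
`a(ζ^j + ζ^{−j}) = b(ζ^k + ζ^{−k})` for `ζ = exp(2πi/p)`. -/
theorem stmt4 (p : ℕ) (hp : p.Prime) (hp3 : 3 < p) (j k : ℕ)
    (hj : j ≤ (p - 1) / 2) (hk : k ≤ (p - 1) / 2) (hjk : j ≠ k) :
    Irrational (Real.cos (2 * π * j / p) / Real.cos (2 * π * k / p)) ∧
      ¬ ∃ a b : ℤ, a ≠ 0 ∧ b ≠ 0 ∧
        (a : ℂ) * (Complex.exp (2 * Real.pi * Complex.I / p) ^ (j : ℤ) +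
            Complex.exp (2 * Real.pi * Complex.I / p) ^ (-(j : ℤ))) =
          (b : ℂ) * (Complex.exp (2 * Real.pi * Complex.I / p) ^ (k : ℤ) +
            Complex.exp (2 * Real.pi * Complex.I / p) ^ (-(k : ℤ))) := by
  have hodd : p % 2 = 1 := Nat.odd_iff.mp (hp.odd_of_ne_two (by omega))
  set ζ : ℂ := Complex.exp (2 * Real.pi * Complex.I / p) with hζdef
  have hζ : IsPrimitiveRoot ζ p := Complex.isPrimitiveRoot_exp p (by omega)
  have hcos : ∀ m : ℕ, ζ ^ (m : ℤ) + ζ ^ (-(m : ℤ))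
      = 2 * ((Real.cos (2 * π * m / p) : ℝ) : ℂ) := by
    intro m
    have hθ : ((2 * π * m / p : ℝ) : ℂ) * Complex.I = (m : ℤ) * (2 * Real.pi * Complex.I / p) := by
      push_cast
      ring
    have h1 : ζ ^ (m : ℤ) = Complex.exp (((2 * π * m / p : ℝ) : ℂ) * Complex.I) := by
      rw [hζdef, ← Complex.exp_int_mul, hθ]
    have h2 : ζ ^ (-(m : ℤ)) = Complex.exp (-(((2 * π * m / p : ℝ) : ℂ) * Complex.I)) := by
      rw [hζdef, ← Complex.exp_int_mul]
      congr 1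
      push_cast
      ring
    rw [h1, h2, show -(((2 * π * m / p : ℝ) : ℂ) * Complex.I)
        = ((-(2 * π * m / p) : ℝ) : ℂ) * Complex.I by push_cast; ring,
      Complex.exp_mul_I, Complex.exp_mul_I, ← Complex.ofReal_cos, ← Complex.ofReal_cos,
      ← Complex.ofReal_sin, ← Complex.ofReal_sin, Real.cos_neg, Real.sin_neg]
    push_cast
    ring
  have hcosk : Real.cos (2 * π * k / p) ≠ 0 := by
    intro h0
    obtain ⟨n, hn⟩ := Real.cos_eq_zero_iff.mp h0
    have hπ : π ≠ 0 := Real.pi_ne_zero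
    have hp0 : (p : ℝ) ≠ 0 := Nat.cast_ne_zero.mpr (by omega)
    have h2 : (4 : ℝ) * k = (2 * n + 1) * p := by
      have hA : π * (2 * (k : ℝ) / p - (2 * (n : ℝ) + 1) / 2) = 0 := by
        linear_combination hn
      have hB : 2 * (k : ℝ) / p - (2 * (n : ℝ) + 1) / 2 = 0 := by
        rcases mul_eq_zero.mp hA with h | h
        · exact absurd h hπ
        · exact h
      field_simp at hB
      linarith
    have h4 : (4 : ℤ) * k = (2 * n + 1) * p := by exact_mod_cast h2
    have hkb : 4 * k + 2 ≤ 2 * p := by omega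
    have hkbz : (4 : ℤ) * k + 2 ≤ 2 * p := by exact_mod_cast hkb
    have hpz : (0 : ℤ) < p := by exact_mod_cast hp.pos
    have hub : 2 * n + 1 < 2 := by
      have : (2 * n + 1) * (p : ℤ) < 2 * p := by linarith
      exact lt_of_mul_lt_mul_right this (le_of_lt hpz)
    have hlb : 0 ≤ 2 * n + 1 := by
      by_contra hcon
      push_neg at hcon
      have hneg : (2 * n + 1) * (p : ℤ) < 0 := mul_neg_of_neg_of_pos (by omega) hpz
      have hkn : (0 : ℤ) ≤ 4 * k := by positivity
      linarith
    have hn0 : n = 0 := by omega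
    rw [hn0] at h4
    have : (4 : ℤ) * k = p := by linarith
    have hnat : 4 * k = p := by exact_mod_cast this
    omega
  constructor
  · rintro ⟨q, hq⟩
    have hcj : Real.cos (2 * π * j / p) = q * Real.cos (2 * π * k / p) :=
      (div_eq_iff hcosk).mp hq.symm
    have hq0 : (1 : ℚ) = 0 ∧ q = 0 := by
      apply no_rel p hp hp3 j k hj hk hjk ζ hζ 1 q
      rw [hcos j, hcos k, hcj]
      push_cast
      ring
    exact one_ne_zero hq0.1
  · rintro ⟨a, b, ha, hb, hab⟩
    have h := no_rel p hp hp3 j k hj hk hjk ζ hζ a b (by exact_mod_cast hab)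
    exact ha (by exact_mod_cast h.1)
end

section
/- Let 𝕂 be a number field of finite degree over ℚ. Then there exists a positive integer ℓ such that for every prime p > 3 not dividing ℓ, and for all distinct j, k ∈ {0, 1, ..., (p−1)/2}, the ratio cos(2πj/p)/cos(2πk/p) does not belong to 𝕂. -/
/-!
With `ζ = exp(2πi/p)` and `h = (p - 1)/2`, one has `2 ζ^h cos(2πm/p) = ζ^(h+m) + ζ^(h-m)` with
both exponents in `[0, p)`. A rational relation `cos(2πj/p) = r cos(2πk/p)` thus becomes a rational
polynomial of degree `< p` with at most four monomials vanishing at `ζ`; it must be a multiple of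
`1 + X + ⋯ + X^(p-1)`, which for `p > 4` forces it to vanish, while its coefficient at `h + j` does
not. Hence the ratio is irrational and, lying in `ℚ(ζ_p)`, cannot lie in `K` once
`K ∩ ℚ(ζ_p) = ℚ`. The fields `ℚ(ζ_p)` for distinct primes are linearly disjoint and `K` has only
finitely many subfields, so this fails for only finitely many `p`; `ℓ` is their product.
-/

open Real Polynomial IntermediateField Complex

theorem IntermediateField.finite_Iic {F E : Type*} [Field F] [Field E] [Algebra F E]
    (K : IntermediateField F E) [FiniteDimensional F K] [Algebra.IsSeparable F K] :
    (Set.Iic K).Finite :=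
  have := Field.finite_intermediateField_of_exists_primitive_element F K
    (Field.exists_primitive_element F K)
  (Set.finite_range lift).subset fun _ hL => ⟨restrict hL, lift_restrict hL⟩

theorem IntermediateField.finite_setOf_inf_ne_bot {F E ι : Type*} [Field F] [Field E]
    [Algebra F E] (K : IntermediateField F E) [FiniteDimensional F K] [Algebra.IsSeparable F K]
    {L : ι → IntermediateField F E} {s : Set ι} (hL : s.Pairwise fun i j => L i ⊓ L j = ⊥) :
    {i | i ∈ s ∧ K ⊓ L i ≠ ⊥}.Finite := by
  refine Set.Finite.of_finite_image (f := fun i => K ⊓ L i) (K.finite_Iic.subset ?_)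
    fun i hi j hj (hij : K ⊓ L i = K ⊓ L j) => ?_
  · rintro _ ⟨i, -, rfl⟩
    exact Set.mem_Iic.2 inf_le_left
  · by_contra hne
    refine hi.2 (eq_bot_iff.2 ?_)
    rw [← hL hi.1 hj.1 hne]
    exact le_inf inf_le_right (hij.le.trans inf_le_right)

theorem IsPrimitiveRoot.adjoin_inf_adjoin_eq_bot {L : Type*} [Field L] [CharZero L] {ζ η : L}
    {m n : ℕ} [NeZero m] [NeZero n] (hζ : IsPrimitiveRoot ζ m) (hη : IsPrimitiveRoot η n)
    (h : m.Coprime n) : ℚ⟮ζ⟯ ⊓ ℚ⟮η⟯ = ⊥ := by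
  have finrank_eq (F : IntermediateField ℚ L) (k : ℕ) [NeZero k]
      (hF : IsCyclotomicExtension {k} ℚ F) : Module.finrank ℚ F = k.totient :=
    IsCyclotomicExtension.finrank _ (Polynomial.cyclotomic.irreducible_rat (NeZero.pos _))
  have hm := (isCyclotomicExtension_singleton_iff_eq_adjoin m ℚ L ℚ⟮ζ⟯ hζ).2 rfl
  have hn := (isCyclotomicExtension_singleton_iff_eq_adjoin n ℚ L ℚ⟮η⟯ hη).2 rfl
  have : NeZero (m.lcm n) := ⟨Nat.lcm_ne_zero (NeZero.ne _) (NeZero.ne _)⟩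
  have : FiniteDimensional ℚ ℚ⟮ζ⟯ :=
    adjoin.finiteDimensional (hζ.isIntegral (NeZero.pos _)).tower_top
  have : FiniteDimensional ℚ ℚ⟮η⟯ :=
    adjoin.finiteDimensional (hη.isIntegral (NeZero.pos _)).tower_top
  refine (LinearDisjoint.of_finrank_sup ?_).inf_eq_bot
  rw [finrank_eq _ _ (isCyclotomicExtension_lcm_sup ℚ L m n ℚ⟮ζ⟯ ℚ⟮η⟯), finrank_eq _ _ hm,
    finrank_eq _ _ hn, h.lcm_eq_mul, Nat.totient_mul h]

theorem minpoly.exists_eq_C_mul_of_natDegree_le {F A : Type*} [Field F] [Ring A] [Algebra F A]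
    {x : A} (hx : IsIntegral F x) {f : F[X]} (hf : Polynomial.aeval x f = 0)
    (hdeg : f.natDegree ≤ (minpoly F x).natDegree) : ∃ c, f = C c * minpoly F x := by
  obtain ⟨g, rfl⟩ := minpoly.dvd F x hf
  rcases eq_or_ne g 0 with rfl | hg
  · exact ⟨0, by simp⟩
  rw [natDegree_mul (minpoly.ne_zero hx) hg] at hdeg
  rw [eq_C_of_natDegree_eq_zero (by omega : g.natDegree = 0), mul_comm]
  exact ⟨_, rfl⟩

theorem IsPrimitiveRoot.coeff_eq_of_aeval_eq_zero {K : Type*} [Field K] [CharZero K] {p : ℕ}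
    [Fact p.Prime] {ζ : K} (hζ : IsPrimitiveRoot ζ p) {f : ℚ[X]} (hdeg : f.natDegree < p)
    (hf : aeval ζ f = 0) {i j : ℕ} (hi : i < p) (hj : j < p) : f.coeff i = f.coeff j := by
  have hp := (Fact.out : p.Prime).pos
  obtain ⟨c, rfl⟩ := minpoly.exists_eq_C_mul_of_natDegree_le (hζ.isIntegral hp).tower_top hf (by
    rw [← cyclotomic_eq_minpoly_rat hζ hp, natDegree_cyclotomic, Nat.totient_prime Fact.out]
    omega)
  rw [← cyclotomic_eq_minpoly_rat hζ hp, cyclotomic_prime]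
  simp [coeff_C_mul, coeff_X_pow, hi, hj]

theorem IsPrimitiveRoot.pow_add_pow_ne_mul {K : Type*} [Field K] [CharZero K] {p : ℕ}
    [Fact p.Prime] (hp : 4 < p) {ζ : K} (hζ : IsPrimitiveRoot ζ p) {a b c d : ℕ} (ha : a < p)
    (hb : b < p) (hc : c < p) (hd : d < p) (hac : a ≠ c) (had : a ≠ d) (r : ℚ) :
    ζ ^ a + ζ ^ b ≠ r * (ζ ^ c + ζ ^ d) := by
  intro h
  have hf : aeval ζ (X ^ a + X ^ b - C r * (X ^ c + X ^ d)) = 0 := by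
    simp only [map_sub, map_add, map_mul, map_pow, aeval_X, aeval_C, eq_ratCast]
    exact sub_eq_zero.2 h
  have hdeg : (X ^ a + X ^ b - C r * (X ^ c + X ^ d)).natDegree < p := by
    refine Nat.lt_of_le_sub_one (by omega) ?_
    compute_degree
    all_goals simp only [max_le_iff]; omega
  obtain ⟨i, hi, hiabcd⟩ := Finset.exists_mem_notMem_of_card_lt_card
    (s := {a, b, c, d}) (t := Finset.range p) (by
      rw [Finset.card_range]
      exact Finset.card_le_four.trans_lt hp)
  -- the coefficient at `a` is `1` or `2`, the one at `i` is `0`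
  have := hζ.coeff_eq_of_aeval_eq_zero hdeg hf ha (Finset.mem_range.1 hi)
  simp only [Finset.mem_insert, Finset.mem_singleton, not_or] at hiabcd
  simp [coeff_X_pow, hac, had, hiabcd] at this
  split_ifs at this <;> norm_num at this

noncomputable def Complex.cyclotomicSubfield (n : ℕ) : IntermediateField ℚ ℂ :=
  ℚ⟮exp (2 * π * I / n)⟯

theorem Complex.cyclotomicSubfield_inf_eq_bot {m n : ℕ} (hm : m ≠ 0) (hn : n ≠ 0)
    (h : m.Coprime n) : cyclotomicSubfield m ⊓ cyclotomicSubfield n = ⊥ :=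
  have : NeZero m := ⟨hm⟩
  have : NeZero n := ⟨hn⟩
  (isPrimitiveRoot_exp m hm).adjoin_inf_adjoin_eq_bot (isPrimitiveRoot_exp n hn) h

theorem Complex.two_mul_cos_two_pi_mul_div (m n : ℕ) :
    2 * (Real.cos (2 * π * m / n) : ℂ) =
      exp (2 * π * I / n) ^ m + (exp (2 * π * I / n) ^ m)⁻¹ := by
  rw [ofReal_cos, two_cos, ← exp_nat_mul, ← exp_neg]
  push_cast
  ring_nf

theorem Complex.ofReal_cos_mem_cyclotomicSubfield (m n : ℕ) :
    (Real.cos (2 * π * m / n) : ℂ) ∈ cyclotomicSubfield n := by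
  have hζ : exp (2 * π * I / n) ∈ cyclotomicSubfield n := mem_adjoin_simple_self ℚ _
  rw [eq_div_of_mul_eq two_ne_zero ((mul_comm _ _).trans (two_mul_cos_two_pi_mul_div m n))]
  exact div_mem (add_mem (pow_mem hζ m) (inv_mem (pow_mem hζ m))) (ofNat_mem _ 2)

theorem Complex.ofReal_cos_div_cos_ne_ratCast {p : ℕ} [Fact p.Prime] (hp : 4 < p) {j k : ℕ}
    (hj : j ≤ (p - 1) / 2) (hk : k ≤ (p - 1) / 2) (hjk : j ≠ k) (r : ℚ) :
    ((Real.cos (2 * π * j / p) / Real.cos (2 * π * k / p) : ℝ) : ℂ) ≠ r := by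
  set ζ := exp (2 * π * I / p)
  have hζ : IsPrimitiveRoot ζ p := isPrimitiveRoot_exp p (NeZero.ne p)
  set h := (p - 1) / 2
  have mul_two_cos (m : ℕ) (hm : m ≤ h) :
      ζ ^ h * (2 * (Real.cos (2 * π * m / p) : ℂ)) = ζ ^ (h + m) + ζ ^ (h - m) := by
    rw [two_mul_cos_two_pi_mul_div, mul_add, pow_add, pow_sub₀ _ (hζ.ne_zero (NeZero.ne p)) hm]
  have hk0 : (Real.cos (2 * π * k / p) : ℂ) ≠ 0 := by
    -- the case `r = 0` of the relation, with `j` and `k` swapped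
    intro h0
    refine hζ.pow_add_pow_ne_mul hp (a := h + k) (b := h - k) (c := h + j) (d := h - j)
      (by omega) (by omega) (by omega) (by omega) (by omega) (by omega) 0 ?_
    rw [← mul_two_cos k hk, h0]
    simp
  intro hr
  rw [ofReal_div, div_eq_iff hk0] at hr
  refine hζ.pow_add_pow_ne_mul hp (a := h + j) (b := h - j) (c := h + k) (d := h - k)
    (by omega) (by omega) (by omega) (by omega) (by omega) (by omega) r ?_
  rw [← mul_two_cos j hj, ← mul_two_cos k hk, hr]
  ring

/-- For every number field `𝕂 ⊆ ℂ` of finite degree over `ℚ` there exists a positive integer `ℓ`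
such that for every prime `p > 3` not dividing `ℓ` and all distinct
`j, k ∈ {0, 1, ..., (p−1)/2}`, the ratio `cos(2πj/p)/cos(2πk/p)` does not belong to `𝕂`. -/
theorem stmt6 (K : IntermediateField ℚ ℂ) (hK : FiniteDimensional ℚ K) :
    ∃ ℓ : ℕ, 0 < ℓ ∧ ∀ p : ℕ, p.Prime → 3 < p → ¬ (p ∣ ℓ) →
      ∀ j k : ℕ, j ≤ (p - 1) / 2 → k ≤ (p - 1) / 2 → j ≠ k →
        ((Real.cos (2 * π * j / p) / Real.cos (2 * π * k / p) : ℝ) : ℂ) ∉ K := by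
  have hdisj : {p : ℕ | p.Prime}.Pairwise
      fun p q => cyclotomicSubfield p ⊓ cyclotomicSubfield q = ⊥ := fun p hp q hq hpq =>
    cyclotomicSubfield_inf_eq_bot hp.ne_zero hq.ne_zero ((Nat.coprime_primes hp hq).2 hpq)
  have hS := K.finite_setOf_inf_ne_bot hdisj
  refine ⟨∏ p ∈ hS.toFinset, p, Finset.prod_pos fun p hp => (hS.mem_toFinset.1 hp).1.pos, ?_⟩
  intro p hp hp3 hpℓ j k hj hk hjk hmem
  have : Fact p.Prime := ⟨hp⟩
  have hbot : K ⊓ cyclotomicSubfield p = ⊥ := by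
    by_contra h
    exact hpℓ (Finset.dvd_prod_of_mem _ (hS.mem_toFinset.2 ⟨hp, h⟩))
  have hx : _ ∈ K ⊓ cyclotomicSubfield p := ⟨hmem, by
    rw [ofReal_div]
    exact div_mem (ofReal_cos_mem_cyclotomicSubfield j p) (ofReal_cos_mem_cyclotomicSubfield k p)⟩
  rw [hbot, mem_bot] at hx
  obtain ⟨r, hr⟩ := hx
  exact ofReal_cos_div_cos_ne_ratCast (lt_of_le_of_ne hp3 (by rintro rfl; norm_num at hp))
    hj hk hjk r hr.symm
end

section
/- Let d ∈ ℕ, let φ_1, ..., φ_d : ℂ → ℂ be 1-Lipschitz functions, and let A ∈ M_d(ℂ). Define f : U(d) → ℂ by f(U) = Σ_{k=1}^{d} φ_k(e_k* U* A U e_k). Then f is Lipschitz with constant at most 2‖A‖_HS with respect to the geodesic (Riemannian) distance on U(d) induced by the Hilbert–Schmidt metric on the tangent spaces. -/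
open scoped BigOperators Matrix

/-- The Hilbert–Schmidt (Frobenius) norm of a complex matrix. -/
noncomputable def frobNorm {d : ℕ} (A : Matrix (Fin d) (Fin d) ℂ) : ℝ :=
  Real.sqrt (∑ i, ∑ j, ‖A i j‖ ^ 2)

/-- The geodesic (Riemannian) distance on the unitary group `U(d)` induced by the
Hilbert–Schmidt metric on the tangent spaces: the infimum of lengths of smooth curves inside
`U(d)` joining the two points. -/
noncomputable def geoDist {d : ℕ} (U V : Matrix.unitaryGroup (Fin d) ℂ) : ℝ :=
  sInf {L : ℝ | ∃ γ γ' : ℝ → Matrix (Fin d) (Fin d) ℂ,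
    (∀ (i j : Fin d) (t : ℝ), HasDerivAt (fun s => γ s i j) (γ' t i j) t) ∧
    (∀ i j : Fin d, Continuous fun t => γ' t i j) ∧
    (∀ t ∈ Set.Icc (0 : ℝ) 1, γ t ∈ Matrix.unitaryGroup (Fin d) ℂ) ∧
    γ 0 = (U : Matrix (Fin d) (Fin d) ℂ) ∧ γ 1 = (V : Matrix (Fin d) (Fin d) ℂ) ∧
    L = ∫ t in (0 : ℝ)..1, frobNorm (γ' t)}

/-!
Along an admissible curve `γ` in `U(d)`, the derivative of `(γᴴ A γ)ₖₖ` is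
`(γ'ᴴ A γ)ₖₖ + (γᴴ A γ')ₖₖ`. Cauchy–Schwarz together with the unitary invariance of the
Hilbert–Schmidt norm bounds the sum over `k` of the moduli of these derivatives by
`2 ‖A‖_HS ‖γ'‖_HS`; integrating and using that each `φₖ` is 1-Lipschitz gives
`|f(U) - f(V)| ≤ 2 ‖A‖_HS · length γ`. Passing to the infimum requires at least one admissible
curve (`sInf ∅ = 0`): `t ↦ U exp(tK)` with `K` a skew-Hermitian logarithm of `U⁻¹V`, obtained by
functional calculus, is one.
-/

open Matrix

lemma le_mul_csInf {S : Set ℝ} {a c : ℝ} (hS : S.Nonempty) (ha : 0 ≤ a)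
    (h : ∀ L ∈ S, c ≤ a * L) : c ≤ a * sInf S := by
  rw [← smul_eq_mul, ← Real.sInf_smul_of_nonneg ha]
  exact le_csInf hS.smul_set (by rintro _ ⟨L, hL, rfl⟩; exact h L hL)

lemma norm_sum_sub_sum_le_of_lipschitzWith {ι E F : Type*} [Fintype ι]
    [SeminormedAddCommGroup E] [SeminormedAddCommGroup F] {φ : ι → E → F}
    (hφ : ∀ k, LipschitzWith 1 (φ k)) (x y : ι → E) :
    ‖∑ k, φ k (x k) - ∑ k, φ k (y k)‖ ≤ ∑ k, ‖x k - y k‖ := by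
  rw [← Finset.sum_sub_distrib]
  refine (norm_sum_le _ _).trans (Finset.sum_le_sum fun k _ => ?_)
  simpa [dist_eq_norm] using (hφ k).dist_le_mul (x k) (y k)

section Frobenius
variable {d : ℕ}

lemma frobNorm_nonneg (M : Matrix (Fin d) (Fin d) ℂ) : 0 ≤ frobNorm M := Real.sqrt_nonneg _

lemma continuous_frobNorm : Continuous (frobNorm : Matrix (Fin d) (Fin d) ℂ → ℝ) := by
  unfold frobNorm; fun_prop

lemma ofReal_frobNorm_sq (M : Matrix (Fin d) (Fin d) ℂ) :
    ((frobNorm M ^ 2 : ℝ) : ℂ) = trace (M * Mᴴ) := by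
  rw [frobNorm, Real.sq_sqrt (by positivity)]
  simp [trace, mul_apply, Complex.mul_conj, Complex.normSq_eq_norm_sq]

lemma frobNorm_conjTranspose (M : Matrix (Fin d) (Fin d) ℂ) : frobNorm Mᴴ = frobNorm M := by
  simp only [frobNorm, conjTranspose_apply, norm_star]
  rw [Finset.sum_comm]

lemma frobNorm_mul_unitary (M : Matrix (Fin d) (Fin d) ℂ) {B : Matrix (Fin d) (Fin d) ℂ}
    (hB : B ∈ unitaryGroup (Fin d) ℂ) : frobNorm (M * B) = frobNorm M := by
  have hBB : B * Bᴴ = 1 := mem_unitaryGroup_iff.mp hB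
  have hsq : frobNorm (M * B) ^ 2 = frobNorm M ^ 2 := by
    apply Complex.ofReal_injective
    rw [ofReal_frobNorm_sq, ofReal_frobNorm_sq, conjTranspose_mul, Matrix.mul_assoc,
      ← Matrix.mul_assoc B, hBB, Matrix.one_mul]
  exact (sq_eq_sq₀ (frobNorm_nonneg _) (frobNorm_nonneg _)).mp hsq

lemma sum_norm_conjTranspose_mul_diag_le (C M : Matrix (Fin d) (Fin d) ℂ) :
    ∑ k, ‖(Cᴴ * M) k k‖ ≤ frobNorm C * frobNorm M := by
  calc ∑ k, ‖(Cᴴ * M) k k‖ ≤ ∑ k, ∑ i, ‖C i k‖ * ‖M i k‖ := by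
        refine Finset.sum_le_sum fun k _ => ?_
        rw [mul_apply]
        refine (norm_sum_le _ _).trans_eq ?_
        simp only [conjTranspose_apply, norm_mul, norm_star]
    _ = ∑ p : Fin d × Fin d, ‖C p.1 p.2‖ * ‖M p.1 p.2‖ := by
        rw [Finset.sum_comm, Fintype.sum_prod_type]
    _ ≤ frobNorm C * frobNorm M := by
        simpa only [frobNorm, Fintype.sum_prod_type] using
          Real.sum_mul_le_sqrt_mul_sqrt Finset.univ (fun p : Fin d × Fin d => ‖C p.1 p.2‖)
            (fun p => ‖M p.1 p.2‖)

lemma sum_norm_diag_conjTranspose_mul_mul_add_le (A C : Matrix (Fin d) (Fin d) ℂ)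
    {B : Matrix (Fin d) (Fin d) ℂ} (hB : B ∈ unitaryGroup (Fin d) ℂ) :
    ∑ k, ‖(Cᴴ * A * B) k k + (Bᴴ * A * C) k k‖ ≤ 2 * frobNorm A * frobNorm C := by
  have h₁ := sum_norm_conjTranspose_mul_diag_le C (A * B)
  have h₂ := sum_norm_conjTranspose_mul_diag_le (Aᴴ * B) C
  rw [frobNorm_mul_unitary A hB] at h₁
  rw [frobNorm_mul_unitary _ hB, frobNorm_conjTranspose, conjTranspose_mul,
    conjTranspose_conjTranspose] at h₂
  calc ∑ k, ‖(Cᴴ * A * B) k k + (Bᴴ * A * C) k k‖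
      ≤ ∑ k, ‖(Cᴴ * (A * B)) k k‖ + ∑ k, ‖(Bᴴ * A * C) k k‖ := by
        rw [← Finset.sum_add_distrib, Matrix.mul_assoc]
        exact Finset.sum_le_sum fun k _ => norm_add_le _ _
    _ ≤ 2 * frobNorm A * frobNorm C := by linarith

end Frobenius

namespace Matrix
variable {n : Type*} [Fintype n]

lemma star_single_dotProduct_mulVec_single [DecidableEq n] (M : Matrix n n ℂ) (k : n) :
    star (Pi.single k 1 : n → ℂ) ⬝ᵥ (M *ᵥ Pi.single k 1) = M k k := by
  simp

lemma conjTranspose_mul_mul_apply (X A Y : Matrix n n ℂ) (k : n) :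
    (Xᴴ * A * Y) k k = ∑ i, ∑ j, star (X i k) * A i j * Y j k := by
  simp only [mul_apply, conjTranspose_apply, Finset.sum_mul]
  exact Finset.sum_comm

lemma hasDerivAt_conjTranspose_mul_mul_diag (A : Matrix n n ℂ) {γ : ℝ → Matrix n n ℂ}
    {γ' : Matrix n n ℂ} {t : ℝ} (hγ : ∀ i j, HasDerivAt (fun s => γ s i j) (γ' i j) t) (k : n) :
    HasDerivAt (fun s => ((γ s)ᴴ * A * γ s) k k)
      ((γ'ᴴ * A * γ t) k k + ((γ t)ᴴ * A * γ') k k) t := by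
  simp only [conjTranspose_mul_mul_apply, ← Finset.sum_add_distrib]
  exact HasDerivAt.fun_sum fun i _ => HasDerivAt.fun_sum fun j _ =>
    ((hγ i k).star.mul_const (A i j)).mul (hγ j k)

end Matrix

lemma sum_norm_diag_sub_le_integral {d : ℕ} (A : Matrix (Fin d) (Fin d) ℂ)
    {γ γ' : ℝ → Matrix (Fin d) (Fin d) ℂ}
    (hd : ∀ (i j : Fin d) (t : ℝ), HasDerivAt (fun s => γ s i j) (γ' t i j) t)
    (hc : ∀ i j : Fin d, Continuous fun t => γ' t i j)
    (hm : ∀ t ∈ Set.Icc (0 : ℝ) 1, γ t ∈ unitaryGroup (Fin d) ℂ) :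
    ∑ k, ‖((γ 0)ᴴ * A * γ 0) k k - ((γ 1)ᴴ * A * γ 1) k k‖
      ≤ 2 * frobNorm A * ∫ t in (0 : ℝ)..1, frobNorm (γ' t) := by
  set D : Fin d → ℝ → ℂ := fun k t => ((γ' t)ᴴ * A * γ t) k k + ((γ t)ᴴ * A * γ' t) k k
  have hγ : Continuous γ := continuous_pi fun i => continuous_pi fun j =>
    continuous_iff_continuousAt.2 fun t => (hd i j t).continuousAt
  have hγ' : Continuous γ' := continuous_pi fun i => continuous_pi fun j => hc i j
  have hD (k : Fin d) : Continuous (D k) := by fun_prop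
  have hspeed : Continuous fun t => frobNorm (γ' t) := continuous_frobNorm.comp hγ'
  calc ∑ k, ‖((γ 0)ᴴ * A * γ 0) k k - ((γ 1)ᴴ * A * γ 1) k k‖
      = ∑ k, ‖∫ t in (0 : ℝ)..1, D k t‖ := by
        refine Finset.sum_congr rfl fun k _ => ?_
        rw [intervalIntegral.integral_eq_sub_of_hasDerivAt
          (fun t _ => hasDerivAt_conjTranspose_mul_mul_diag A (fun i j => hd i j t) k)
          ((hD k).intervalIntegrable 0 1), norm_sub_rev]
    _ ≤ ∑ k, ∫ t in (0 : ℝ)..1, ‖D k t‖ := Finset.sum_le_sum fun k _ =>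
        intervalIntegral.norm_integral_le_integral_norm zero_le_one
    _ = ∫ t in (0 : ℝ)..1, ∑ k, ‖D k t‖ := (intervalIntegral.integral_finsetSum
        fun k _ => (hD k).norm.intervalIntegrable 0 1).symm
    _ ≤ ∫ t in (0 : ℝ)..1, 2 * frobNorm A * frobNorm (γ' t) :=
        intervalIntegral.integral_mono_on zero_le_one
          ((continuous_finsetSum _ fun k _ => (hD k).norm).intervalIntegrable 0 1)
          ((continuous_const.mul hspeed).intervalIntegrable 0 1)
          fun t ht => sum_norm_diag_conjTranspose_mul_mul_add_le A (γ' t) (hm t ht)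
    _ = 2 * frobNorm A * ∫ t in (0 : ℝ)..1, frobNorm (γ' t) :=
        intervalIntegral.integral_const_mul _ _

lemma Complex.star_log_eq_neg_of_norm_eq_one {z : ℂ} (hz : ‖z‖ = 1) :
    star (Complex.log z) = -Complex.log z := by
  apply Complex.ext <;> simp [Complex.log_re, hz]

lemma exists_mem_skewAdjoint_exp_eq {A : Type*} [CStarAlgebra A] {u : A} (hu : u ∈ unitary A)
    (hfin : (spectrum ℂ u).Finite) : ∃ K ∈ skewAdjoint A, NormedSpace.exp K = u := by
  have hnorm (z : ℂ) (hz : z ∈ spectrum ℂ u) : ‖z‖ = 1 := by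
    simpa using spectrum.subset_circle_of_unitary hu hz
  -- the branch cut of `Complex.log` is harmless on a finite spectrum
  have hlog : ContinuousOn Complex.log (spectrum ℂ u) := hfin.continuousOn _
  refine ⟨cfc Complex.log u, ?_, ?_⟩
  · rw [skewAdjoint.mem_iff, ← cfc_star, ← cfc_neg]
    exact cfc_congr fun z hz => Complex.star_log_eq_neg_of_norm_eq_one (hnorm z hz)
  · rw [← CFC.complex_exp_eq_normedSpace_exp (cfc_predicate _ u),
      ← cfc_comp' Complex.exp Complex.log u]
    refine (cfc_congr fun z hz => Complex.exp_log ?_).trans (cfc_id' ℂ u)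
    exact norm_ne_zero_iff.mp ((hnorm z hz).symm ▸ one_ne_zero)

namespace Matrix

section L2Operator
open scoped Matrix.Norms.L2Operator
variable {n : Type*} [Fintype n] [DecidableEq n]

lemma hasDerivAt_entry {γ : ℝ → Matrix n n ℂ} {γ' : Matrix n n ℂ} {t : ℝ}
    (h : HasDerivAt γ γ' t) (i j : n) : HasDerivAt (fun s => γ s i j) (γ' i j) t :=
  let entry : Matrix n n ℂ →L[ℝ] ℂ :=
    ⟨entryLinearMap ℝ ℂ i j, LinearMap.continuous_of_finiteDimensional _⟩
  entry.hasFDerivAt.comp_hasDerivAt t h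

lemma exists_unitary_curve (U V : unitaryGroup n ℂ) :
    ∃ γ γ' : ℝ → Matrix n n ℂ,
      (∀ (i j : n) (t : ℝ), HasDerivAt (fun s => γ s i j) (γ' t i j) t) ∧
      (∀ i j : n, Continuous fun t => γ' t i j) ∧
      (∀ t ∈ Set.Icc (0 : ℝ) 1, γ t ∈ unitaryGroup n ℂ) ∧
      γ 0 = (U : Matrix n n ℂ) ∧ γ 1 = (V : Matrix n n ℂ) := by
  obtain ⟨K, hK, hexp⟩ := exists_mem_skewAdjoint_exp_eq (star U * V).2 (finite_spectrum _)
  set γ : ℝ → Matrix n n ℂ := fun t => U * NormedSpace.exp (t • K)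
  have hγ (t : ℝ) : HasDerivAt γ (γ t * K) t := by
    simpa only [γ, mul_assoc] using (hasDerivAt_exp_smul_const K t).const_mul (U : Matrix n n ℂ)
  have hγc : Continuous γ := continuous_iff_continuousAt.2 fun t => (hγ t).continuousAt
  refine ⟨γ, fun t => γ t * K, fun i j t => hasDerivAt_entry (hγ t) i j,
    fun i j => (hγc.mul continuous_const).matrix_elem i j, fun t _ => ?_, by simp [γ], ?_⟩
  · let +nondep : NormedAlgebra ℚ (Matrix n n ℂ) := .restrictScalars ℚ ℂ _
    exact mul_mem U.2 (NormedSpace.exp_mem_unitary_of_mem_skewAdjoint (skewAdjoint.smul_mem t hK))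
  · simp [γ, hexp, ← mul_assoc]

end L2Operator

end Matrix

/-- If `φ_1, ..., φ_d : ℂ → ℂ` are 1-Lipschitz and `A ∈ M_d(ℂ)`, then
`f(U) = Σ_k φ_k(e_k* U* A U e_k)` is `2‖A‖_HS`-Lipschitz on `U(d)` with respect to the geodesic
distance induced by the Hilbert–Schmidt metric. -/
theorem stmt8 (d : ℕ) (φ : Fin d → ℂ → ℂ) (hφ : ∀ k, LipschitzWith 1 (φ k))
    (A : Matrix (Fin d) (Fin d) ℂ) :
    ∀ U V : Matrix.unitaryGroup (Fin d) ℂ,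
      ‖
          ((∑ k : Fin d, φ k (star (Pi.single k 1 : Fin d → ℂ) ⬝ᵥ
              ((star (U : Matrix (Fin d) (Fin d) ℂ) * A * (U : Matrix (Fin d) (Fin d) ℂ)) *ᵥ (Pi.single k 1 : Fin d → ℂ)))) -
            ∑ k : Fin d, φ k (star (Pi.single k 1 : Fin d → ℂ) ⬝ᵥ
              ((star (V : Matrix (Fin d) (Fin d) ℂ) * A * (V : Matrix (Fin d) (Fin d) ℂ)) *ᵥ (Pi.single k 1 : Fin d → ℂ))))‖ ≤
        2 * frobNorm A * geoDist U V := by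
  intro U V
  simp only [star_single_dotProduct_mulVec_single, star_eq_conjTranspose]
  obtain ⟨γ₀, γ₀', hd₀, hc₀, hm₀, h₀, h₁⟩ := exists_unitary_curve U V
  refine le_mul_csInf ⟨_, γ₀, γ₀', hd₀, hc₀, hm₀, h₀, h₁, rfl⟩ 
    (mul_nonneg zero_le_two (frobNorm_nonneg A)) ?_
  rintro _ ⟨γ, γ', hd, hc, hm, hU, hV, rfl⟩
  rw [← hU, ← hV]
  exact (norm_sum_sub_sum_le_of_lipschitzWith hφ _ _).trans
    (sum_norm_diag_sub_le_integral A hd hc hm)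
end

section
/- Let G be a finite group, ρ an irreducible unitary representation of G of dimension d, b ∈ ℂ^d a unit vector, and f : G → ℂ with (1/|G|)Σ_x |f(x)|² ≤ 1. Then the matrix A = d · (1/|G|) Σ_{x∈G} f(x) ρ(x)* b b* ρ(x) satisfies ‖A‖_HS² ≤ d. -/
open scoped BigOperators Matrix

/-- A unitary matrix representation is irreducible if its only invariant subspaces are `⊥` and
`⊤`. -/
def IsIrredRep {G : Type*} [Group G] {d : ℕ} (ρ : G →* Matrix.unitaryGroup (Fin d) ℂ) : Prop :=
  ∀ W : Submodule ℂ (Fin d → ℂ),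
    (∀ (g : G), ∀ v ∈ W, (ρ g : Matrix (Fin d) (Fin d) ℂ) *ᵥ v ∈ W) → W = ⊥ ∨ W = ⊤

/-!
Put `u_x = ρ(x)* b`, so that `A = (d / |G|) Σ_x f(x) u_x u_x*`. The sum `Σ_y u_y u_y*` commutes
with `ρ`, so by Schur's lemma it is a scalar, namely `(|G| / d) · 1` (compare traces). Expanding,
`‖Σ_x f(x) u_x u_x*‖_HS² = Σ_{x,y} conj(f x) f(y) |⟪u_x, u_y⟫|²`; the kernel `|⟪u_x, u_y⟫|²` is
symmetric with row sums `u_x* (Σ_y u_y u_y*) u_x = |G| / d`, so AM-GM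
`|f x| |f y| ≤ (|f x|² + |f y|²) / 2` bounds the double sum by `(|G| / d) Σ_x |f x|²`.
-/

open Matrix

theorem sum_sum_mul_mul_le_of_symm {ι : Type*} [Fintype ι] (K : ι → ι → ℝ) (c : ℝ)
    (hK : ∀ x y, 0 ≤ K x y) (hsymm : ∀ x y, K x y = K y x) (hrow : ∀ x, ∑ y, K x y ≤ c)
    (a : ι → ℝ) : ∑ x, ∑ y, a x * a y * K x y ≤ c * ∑ x, a x ^ 2 := by
  have hamgm : ∀ x y, a x * a y * K x y ≤ (a x ^ 2 * K x y + a y ^ 2 * K y x) / 2 := by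
    intro x y
    rw [hsymm y x]
    nlinarith [mul_nonneg (sq_nonneg (a x - a y)) (hK x y)]
  calc ∑ x, ∑ y, a x * a y * K x y
      ≤ ∑ x, ∑ y, (a x ^ 2 * K x y + a y ^ 2 * K y x) / 2 :=
        Finset.sum_le_sum fun x _ => Finset.sum_le_sum fun y _ => hamgm x y
    _ = ∑ x, a x ^ 2 * ∑ y, K x y := by
        simp only [← Finset.sum_div, Finset.sum_add_distrib, Finset.mul_sum]
        rw [Finset.sum_comm (f := fun x y => a y ^ 2 * K y x)]
        ring
    _ ≤ ∑ x, a x ^ 2 * c :=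
        Finset.sum_le_sum fun x _ => mul_le_mul_of_nonneg_left (hrow x) (sq_nonneg _)
    _ = c * ∑ x, a x ^ 2 := by rw [Finset.mul_sum]; simp only [mul_comm]

theorem Matrix.sum_sum_sq_norm_apply_eq_re_trace {m n : Type*} [Fintype m] [Fintype n]
    (A : Matrix m n ℂ) : ∑ i, ∑ j, ‖A i j‖ ^ 2 = (Aᴴ * A).trace.re := by
  simp only [trace, diag, mul_apply, conjTranspose_apply, Complex.re_sum, Complex.star_def,
    Complex.conj_mul', ← Complex.ofReal_pow, Complex.ofReal_re]
  exact Finset.sum_comm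

theorem Matrix.sum_sum_sq_norm_smul_apply {m n : Type*} [Fintype m] [Fintype n] (a : ℂ)
    (A : Matrix m n ℂ) : ∑ i, ∑ j, ‖(a • A) i j‖ ^ 2 = ‖a‖ ^ 2 * ∑ i, ∑ j, ‖A i j‖ ^ 2 := by
  simp only [smul_apply, smul_eq_mul, norm_mul, mul_pow, Finset.mul_sum]

theorem Matrix.sum_sum_sq_norm_sum_smul_vecMulVec {ι n : Type*} [Fintype ι] [Fintype n]
    (f : ι → ℂ) (u : ι → n → ℂ) :
    ∑ i, ∑ j, ‖(∑ x, f x • vecMulVec (u x) (star (u x))) i j‖ ^ 2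
      = ∑ x, ∑ y, (star (f x) * f y).re * Complex.normSq (star (u x) ⬝ᵥ u y) := by
  simp only [sum_sum_sq_norm_apply_eq_re_trace, conjTranspose_sum, conjTranspose_smul,
    conjTranspose_vecMulVec, star_star, Finset.sum_mul, Finset.mul_sum, trace_sum,
    smul_mul_smul_comm, vecMulVec_mul_vecMulVec, trace_smul, vecMulVec_smul, trace_vecMulVec,
    Complex.re_sum]
  rw [Finset.sum_comm]
  refine Finset.sum_congr rfl fun x _ => Finset.sum_congr rfl fun y _ => ?_
  have hconj : u x ⬝ᵥ star (u y) = star (star (u x) ⬝ᵥ u y) := by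
    rw [star_dotProduct, star_star, dotProduct_comm]
  rw [hconj, smul_eq_mul, smul_eq_mul, Complex.star_def, mul_assoc, Complex.mul_conj',
    ← Complex.ofReal_pow, Complex.sq_norm, ← mul_assoc, Complex.re_mul_ofReal]

theorem Matrix.sum_normSq_star_dotProduct_eq {ι n : Type*} [Fintype ι] [Fintype n]
    [DecidableEq n] {u : ι → n → ℂ} {c : ℝ} (hu : ∀ x, star (u x) ⬝ᵥ u x = 1)
    (hframe : ∑ y, vecMulVec (u y) (star (u y)) = (c : ℂ) • 1) (x : ι) :
    ∑ y, Complex.normSq (star (u x) ⬝ᵥ u y) = c := by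
  have h := congrArg (fun M => star (u x) ᵥ* M ⬝ᵥ u x) hframe
  simp only [vecMul_sum, sum_dotProduct, vecMul_vecMulVec, smul_dotProduct, vecMul_smul,
    vecMul_one, hu, smul_eq_mul, mul_one] at h
  apply Complex.ofReal_injective
  rw [← h, Complex.ofReal_sum]
  refine Finset.sum_congr rfl fun y _ => ?_
  rw [Complex.normSq_eq_conj_mul_self, ← Complex.star_def, star_dotProduct, star_star, mul_comm]

theorem Matrix.sum_sum_sq_norm_sum_smul_vecMulVec_le {ι n : Type*} [Fintype ι] [Fintype n]
    [DecidableEq n] {u : ι → n → ℂ} {c : ℝ} (hu : ∀ x, star (u x) ⬝ᵥ u x = 1)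
    (hframe : ∑ y, vecMulVec (u y) (star (u y)) = (c : ℂ) • 1) (f : ι → ℂ) :
    ∑ i, ∑ j, ‖(∑ x, f x • vecMulVec (u x) (star (u x))) i j‖ ^ 2 ≤ c * ∑ x, ‖f x‖ ^ 2 := by
  set K : ι → ι → ℝ := fun x y => Complex.normSq (star (u x) ⬝ᵥ u y)
  have hsymm : ∀ x y, K x y = K y x := fun x y => by
    simp only [K]; rw [star_dotProduct, Complex.star_def, Complex.normSq_conj]
  rw [sum_sum_sq_norm_sum_smul_vecMulVec]
  calc ∑ x, ∑ y, (star (f x) * f y).re * K x y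
      ≤ ∑ x, ∑ y, ‖f x‖ * ‖f y‖ * K x y := by
        gcongr with x _ y _
        · exact Complex.normSq_nonneg _
        · exact (Complex.re_le_norm _).trans (by rw [norm_mul, norm_star])
    _ ≤ c * ∑ x, ‖f x‖ ^ 2 :=
        sum_sum_mul_mul_le_of_symm K c (fun x y => Complex.normSq_nonneg _) hsymm
          (fun x => (sum_normSq_star_dotProduct_eq hu hframe x).le) _

theorem MonoidHom.commute_sum_map_inv_mul_mul {G R : Type*} [Group G] [Fintype G] [Semiring R]
    (σ : G →* R) (B : R) (g : G) : Commute (σ g) (∑ y, σ y⁻¹ * B * σ y) := by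
  rw [Commute, SemiconjBy, Finset.mul_sum, Finset.sum_mul]
  refine (Fintype.sum_equiv (Equiv.mulRight g) _ _ fun y => ?_).symm
  simp only [Equiv.coe_mulRight, _root_.mul_inv_rev, map_mul, mul_assoc]
  rw [← mul_assoc (σ g), ← map_mul σ g, mul_inv_cancel, map_one, one_mul]

theorem IsIrredRep.exists_eq_smul_one_of_commute {G : Type*} [Group G] {d : ℕ}
    {ρ : G →* unitaryGroup (Fin d) ℂ} (hρ : IsIrredRep ρ) {T : Matrix (Fin d) (Fin d) ℂ}
    (hT : ∀ g, Commute (ρ g : Matrix (Fin d) (Fin d) ℂ) T) : ∃ c : ℂ, T = c • 1 := by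
  rcases isEmpty_or_nonempty (Fin d) with hd | hd
  · exact ⟨0, Subsingleton.elim _ _⟩
  obtain ⟨c, hc⟩ := Module.End.exists_eigenvalue (toLin' T)
  have hinv : ∀ g : G, ∀ v ∈ Module.End.eigenspace (toLin' T) c,
      (ρ g : Matrix (Fin d) (Fin d) ℂ) *ᵥ v ∈ Module.End.eigenspace (toLin' T) c := by
    intro g v hv
    rw [Module.End.mem_eigenspace_iff, toLin'_apply] at hv ⊢
    rw [mulVec_mulVec, ← (hT g).eq, ← mulVec_mulVec, hv, mulVec_smul]
  have htop := (hρ _ hinv).resolve_left (Module.End.hasEigenvalue_iff.mp hc)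
  refine ⟨c, toLin'.injective (LinearMap.ext fun v => ?_)⟩
  have hv := Module.End.mem_eigenspace_iff.mp (htop ▸ Submodule.mem_top : v ∈ _)
  rw [hv, map_smul, toLin'_one, LinearMap.smul_apply, LinearMap.id_apply]

theorem IsIrredRep.smul_sum_star_mul_mul_eq {G : Type*} [Group G] [Fintype G] {d : ℕ}
    {ρ : G →* unitaryGroup (Fin d) ℂ} (hρ : IsIrredRep ρ) (B : Matrix (Fin d) (Fin d) ℂ) :
    (d : ℂ) • ∑ y, star (ρ y : Matrix (Fin d) (Fin d) ℂ) * B * ρ y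
      = ((Fintype.card G : ℂ) * B.trace) • 1 := by
  set σ : G →* Matrix (Fin d) (Fin d) ℂ := (unitaryGroup (Fin d) ℂ).subtype.comp ρ
  have hsum : ∑ y, star (ρ y : Matrix (Fin d) (Fin d) ℂ) * B * ρ y
      = ∑ y, σ y⁻¹ * B * σ y :=
    Finset.sum_congr rfl fun y _ => by simp [σ, ← Unitary.star_eq_inv, Unitary.coe_star]
  have htrace : (∑ y, star (ρ y : Matrix (Fin d) (Fin d) ℂ) * B * ρ y).trace
      = Fintype.card G * B.trace := by
    simp [trace_sum, trace_mul_cycle _ B]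
  obtain ⟨c, hc⟩ := hρ.exists_eq_smul_one_of_commute (σ.commute_sum_map_inv_mul_mul B)
  rw [← hsum] at hc
  rw [← htrace, hc, trace_smul, trace_one, Fintype.card_fin, smul_smul, smul_eq_mul, mul_comm]

/-- If `ρ` is an irreducible unitary representation of a finite group `G` of dimension `d`,
`b` a unit vector and `f : G → ℂ` with `(1/|G|) Σ_x |f(x)|² ≤ 1`, then the matrix
`A = d · (1/|G|) Σ_x f(x) ρ(x)* b b* ρ(x)` satisfies `‖A‖_HS² ≤ d`. -/
theorem stmt12 (G : Type*) [Group G] [Fintype G] (d : ℕ)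
    (ρ : G →* Matrix.unitaryGroup (Fin d) ℂ) (hρ : IsIrredRep ρ)
    (b : Fin d → ℂ) (hb : star b ⬝ᵥ b = 1)
    (f : G → ℂ) (hf : (Fintype.card G : ℝ)⁻¹ * ∑ x : G, ‖f x‖ ^ 2 ≤ 1) :
    (∑ i, ∑ j,
        ‖((d : ℂ) • (Fintype.card G : ℂ)⁻¹ •
            ∑ x : G, f x •
              (star ((ρ x : Matrix (Fin d) (Fin d) ℂ)) *
                Matrix.vecMulVec b (star b) * (ρ x : Matrix (Fin d) (Fin d) ℂ))) i j‖ ^ 2) ≤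
      (d : ℝ) := by
  rcases Nat.eq_zero_or_pos d with rfl | hd
  · simp
  set u : G → Fin d → ℂ := fun x => star (ρ x : Matrix (Fin d) (Fin d) ℂ) *ᵥ b
  have hrankOne : ∀ x, star (ρ x : Matrix (Fin d) (Fin d) ℂ) * vecMulVec b (star b) * ρ x
      = vecMulVec (u x) (star (u x)) := fun x => by
    simp only [u, mul_vecMulVec, vecMulVec_mul, star_mulVec, star_eq_conjTranspose,
      conjTranspose_conjTranspose]
  have hunit : ∀ x, star (u x) ⬝ᵥ u x = 1 := fun x => by
    rw [star_mulVec, star_eq_conjTranspose, conjTranspose_conjTranspose, ← dotProduct_mulVec,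
      mulVec_mulVec, Unitary.mul_star_self_of_mem (ρ x).2, one_mulVec, hb]
  have hframe : ∑ y, vecMulVec (u y) (star (u y))
      = (((Fintype.card G : ℝ) / d : ℝ) : ℂ) • 1 := by
    have h := hρ.smul_sum_star_mul_mul_eq (vecMulVec b (star b))
    simp only [hrankOne, trace_vecMulVec, dotProduct_comm b, hb, mul_one] at h
    have hd0 : (d : ℂ) ≠ 0 := by exact_mod_cast hd.ne'
    rw [← inv_smul_smul₀ hd0 (∑ y, vecMulVec (u y) (star (u y))), h, smul_smul]
    push_cast
    rw [div_eq_inv_mul]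
  simp only [hrankOne, smul_smul, sum_sum_sq_norm_smul_apply]
  calc _ ≤ ‖(d : ℂ) * (Fintype.card G : ℂ)⁻¹‖ ^ 2
          * ((Fintype.card G : ℝ) / d * ∑ x, ‖f x‖ ^ 2) := by
        gcongr
        exact sum_sum_sq_norm_sum_smul_vecMulVec_le hunit hframe f
    _ = d * ((Fintype.card G : ℝ)⁻¹ * ∑ x, ‖f x‖ ^ 2) := by
        rw [norm_mul, norm_inv, Complex.norm_natCast, Complex.norm_natCast]
        field_simp
    _ ≤ d := mul_le_of_le_one_right (Nat.cast_nonneg d) hf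
end
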